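/- arXiv:2508.12218 — 2 statements merged into one kernel-verified Lean document; each statement's English description precedes it below -/
import Mathlib

section
/- For n ≥ 3, the function U(x) = (n(n−2))^((n−2)/4) · (λ/(λ² + |x−y|²))^((n−2)/2) satisfies −ΔU = U^((n+2)/(n−2)) at every point of ℝⁿ, for any λ > 0 and y ∈ ℝⁿ. -/
open Real

/-- The Laplacian of `f : ℝⁿ → ℝ`: `Δf(x) = ∑ᵢ ∂²f/∂xᵢ²(x)`. -/
noncomputable def laplacian {n : ℕ} (f : EuclideanSpace ℝ (Fin n) → ℝ)
    (x : EuclideanSpace ℝ (Fin n)) : ℝ :=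
  ∑ i : Fin n,
    fderiv ℝ (fun z => fderiv ℝ f z (EuclideanSpace.single i 1)) x (EuclideanSpace.single i 1)

theorem aux1 {n : ℕ} (lam : ℝ) (y : EuclideanSpace ℝ (Fin n)) (q : ℝ)
    (z : EuclideanSpace ℝ (Fin n)) (hG : 0 < lam ^ 2 + ‖z - y‖ ^ 2) :
    HasFDerivAt (fun w : EuclideanSpace ℝ (Fin n) => (lam ^ 2 + ‖w - y‖ ^ 2) ^ q)
      ((q * (lam ^ 2 + ‖z - y‖ ^ 2) ^ (q - 1)) • ((2 : ℝ) • (innerSL ℝ (z - y)))) z := by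
  have h1 : HasFDerivAt (fun w : EuclideanSpace ℝ (Fin n) => lam ^ 2 + ‖w - y‖ ^ 2)
      ((2 : ℝ) • (innerSL ℝ (z - y))) z := by
    have h := (((hasFDerivAt_id z).sub_const y).norm_sq).const_add (lam ^ 2)
    refine h.congr_fderiv ?_
    · ext v; simp [two_smul]
  have h2 := (Real.hasDerivAt_rpow_const (x := lam ^ 2 + ‖z - y‖ ^ 2) (p := q)
    (Or.inl hG.ne')).comp_hasFDerivAt z h1
  exact h2

set_option maxHeartbeats 1000000 in
/-- the standard bubble
`U(x) = (n(n−2))^((n−2)/4)·(λ/(λ²+|x−y|²))^((n−2)/2)` satisfies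
`−ΔU = U^((n+2)/(n−2))` everywhere on `ℝⁿ`. -/
theorem bubble_solves_critical (n : ℕ) (hn : 3 ≤ n) (lam : ℝ) (hlam : 0 < lam)
    (y : EuclideanSpace ℝ (Fin n)) (U : EuclideanSpace ℝ (Fin n) → ℝ)
    (hU : ∀ x, U x = ((n : ℝ) * ((n : ℝ) - 2)) ^ (((n : ℝ) - 2) / 4) *
      (lam / (lam ^ 2 + ‖x - y‖ ^ 2)) ^ (((n : ℝ) - 2) / 2)) :
    ∀ x, -laplacian U x = U x ^ (((n : ℝ) + 2) / ((n : ℝ) - 2)) := by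
  intro x
  have hn3 : (3 : ℝ) ≤ (n : ℝ) := by exact_mod_cast hn
  have hn2 : (0 : ℝ) < (n : ℝ) - 2 := by linarith
  set nR : ℝ := (n : ℝ) with hnR
  set p : ℝ := (nR - 2) / 2 with hp
  set c : ℝ := (nR * (nR - 2)) ^ ((nR - 2) / 4) with hc
  have hGpos : ∀ z : EuclideanSpace ℝ (Fin n), 0 < lam ^ 2 + ‖z - y‖ ^ 2 := fun z => by positivity
  have hcpos : 0 < c := Real.rpow_pos_of_pos (by nlinarith) _
  -- rewrite U
  have hU' : U = fun z => (c * lam ^ p) * (lam ^ 2 + ‖z - y‖ ^ 2) ^ (-p) := by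
    funext z
    rw [hU z, Real.div_rpow hlam.le (hGpos z).le, Real.rpow_neg (hGpos z).le, div_eq_mul_inv,
      mul_assoc]
  -- first derivative of U
  have hD1 : ∀ z, HasFDerivAt U
      (((c * lam ^ p) * (-p * (lam ^ 2 + ‖z - y‖ ^ 2) ^ (-p - 1))) •
        ((2 : ℝ) • (innerSL ℝ (z - y)))) z := by
    intro z
    have h := (aux1 lam y (-p) z (hGpos z)).const_mul (c * lam ^ p)
    rw [hU']
    simpa [smul_smul, sub_eq_add_neg, mul_assoc, mul_comm, mul_left_comm] using h
  -- second derivative in direction i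
  have key : ∀ i : Fin n,
      fderiv ℝ (fun z => fderiv ℝ U z (EuclideanSpace.single i 1)) x (EuclideanSpace.single i 1)
      = (-2 * p * (c * lam ^ p)) * ((lam ^ 2 + ‖x - y‖ ^ 2) ^ (-p - 1)
          + (-p - 1) * (lam ^ 2 + ‖x - y‖ ^ 2) ^ (-p - 2) * (2 * (x i - y i) ^ 2)) := by
    intro i
    have hfe : (fun z => fderiv ℝ U z (EuclideanSpace.single i 1))
        = fun z => (-2 * p * (c * lam ^ p)) *
            ((lam ^ 2 + ‖z - y‖ ^ 2) ^ (-p - 1) * (z i - y i)) := by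
      funext z
      rw [(hD1 z).fderiv]
      simp [EuclideanSpace.inner_single_right]
      ring
    rw [hfe]
    have h1 : HasFDerivAt (fun z : EuclideanSpace ℝ (Fin n) => (lam ^ 2 + ‖z - y‖ ^ 2) ^ (-p - 1))
        (((-p - 1) * (lam ^ 2 + ‖x - y‖ ^ 2) ^ (-p - 1 - 1)) • ((2 : ℝ) • (innerSL ℝ (x - y)))) x :=
      aux1 lam y (-p - 1) x (hGpos x)
    have h2 : HasFDerivAt (fun z : EuclideanSpace ℝ (Fin n) => z i - y i)
        (EuclideanSpace.proj (𝕜 := ℝ) i) x :=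
      (EuclideanSpace.proj (𝕜 := ℝ) i).hasFDerivAt.sub_const (y i)
    have h3 := (h1.mul h2).const_mul (-2 * p * (c * lam ^ p))
    erw [h3.fderiv]
    have e1 : (-p - 1 - 1) = -p - 2 := by ring
    simp [EuclideanSpace.inner_single_right, e1]
    ring
  -- the sum
  set G : ℝ := lam ^ 2 + ‖x - y‖ ^ 2 with hGdef
  have hG : 0 < G := hGpos x
  have hsum : ∑ i : Fin n, (x i - y i) ^ 2 = ‖x - y‖ ^ 2 := by
    rw [EuclideanSpace.norm_eq, Real.sq_sqrt (by positivity)]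
    simp [sq_abs]
  have hlap : laplacian U x = ∑ i : Fin n,
      ((-2 * p * (c * lam ^ p)) * G ^ (-p - 1)
        + ((-2 * p * (c * lam ^ p)) * ((-p - 1) * G ^ (-p - 2) * 2)) * (x i - y i) ^ 2) := by
    unfold laplacian
    exact Finset.sum_congr rfl fun i _ => by rw [key i]; ring
  rw [hlap, Finset.sum_add_distrib, Finset.sum_const, ← Finset.mul_sum, hsum,
    Finset.card_univ, Fintype.card_fin]
  have hS : ‖x - y‖ ^ 2 = G - lam ^ 2 := by rw [hGdef]; ring
  have hsplit : G ^ (-p - 1) = G ^ (-p - 2) * G := by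
    rw [show (-p - 1 : ℝ) = (-p - 2) + 1 by ring, Real.rpow_add hG, Real.rpow_one]
  rw [hS, hsplit, hU x, ← hGdef]
  clear key hD1 hU' hlap hU
  have hposm : (0 : ℝ) < nR * (nR - 2) := by nlinarith
  have hq4 : ((nR - 2) / 4) * ((nR + 2) / (nR - 2)) = (nR + 2) / 4 := by
    field_simp
  have hq2 : ((nR - 2) / 2) * ((nR + 2) / (nR - 2)) = (nR + 2) / 2 := by
    field_simp
  have hrhs : (c * (lam / G) ^ p) ^ ((nR + 2) / (nR - 2))
      = (nR * (nR - 2)) ^ ((nR + 2) / 4) * (lam ^ ((nR + 2) / 2) * G ^ (-((nR + 2) / 2))) := by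
    rw [Real.mul_rpow hcpos.le (Real.rpow_nonneg (by positivity) _)]
    rw [hc, ← Real.rpow_mul hposm.le, hq4]
    rw [hp, ← Real.rpow_mul (by positivity : (0:ℝ) ≤ lam / G), hq2]
    rw [Real.div_rpow hlam.le hG.le, Real.rpow_neg hG.le]
    ring
  rw [hrhs]
  have e2 : (nR * (nR - 2)) ^ ((nR + 2) / 4) = nR * (nR - 2) * c := by
    rw [show (nR + 2) / 4 = 1 + (nR - 2) / 4 by ring, Real.rpow_add hposm, Real.rpow_one, hc]
  have e3 : lam ^ ((nR + 2) / 2) = lam ^ p * lam ^ 2 := by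
    rw [show (nR + 2) / 2 = p + 2 by rw [hp]; ring, Real.rpow_add hlam, Real.rpow_two, sq]
  have e1 : G ^ (-((nR + 2) / 2)) = G ^ (-p - 2) := by
    rw [show -((nR + 2) / 2) = -p - 2 by rw [hp]; ring]
  rw [e2, e3, e1, hp, nsmul_eq_mul]
  push_cast [← hnR]
  ring
end

section
/- Let f : (0,∞) → ℝ be C¹ and positive, with lim_{s→0⁺} f(s) = L > 0 and lim_{s→0⁺} s·f'(s) = 0, and with lim_{s→∞} s^(n−2)f(s) = μ > 0 and lim_{s→∞} s^(n−1)f'(s) = −(n−2)μ. Then there exists s > 0 such that ((n−2)/2)·f(s) + s·f'(s) = 0. -/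
open Real Set Filter

/-- under the limits `f(s) → L > 0` and `s f'(s) → 0` as `s → 0⁺`, and
`s^(n−2) f(s) → μ > 0`, `s^(n−1) f'(s) → −(n−2)μ` as `s → ∞`, the function
`G(s) = ((n−2)/2) f(s) + s f'(s)` vanishes at some `s > 0`. -/
theorem G_has_zero (n : ℕ) (hn : 3 ≤ n) (L μ : ℝ) (hL : 0 < L) (hμ : 0 < μ)
    (f : ℝ → ℝ) (hreg : ContDiffOn ℝ 1 f (Ioi 0)) (hpos : ∀ s ∈ Ioi (0 : ℝ), 0 < f s)
    (h0 : Tendsto f (nhdsWithin 0 (Ioi 0)) (nhds L))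
    (h0' : Tendsto (fun s => s * deriv f s) (nhdsWithin 0 (Ioi 0)) (nhds 0))
    (hf : Tendsto (fun s => s ^ (n - 2) * f s) atTop (nhds μ))
    (hf' : Tendsto (fun s => s ^ (n - 1) * deriv f s) atTop (nhds (-((n : ℝ) - 2) * μ))) :
    ∃ s > 0, ((n : ℝ) - 2) / 2 * f s + s * deriv f s = 0 := by
  set G : ℝ → ℝ := fun s => ((n : ℝ) - 2) / 2 * f s + s * deriv f s with hG
  have hn2 : (1 : ℝ) ≤ (n : ℝ) - 2 := by
    have : (3 : ℝ) ≤ (n : ℝ) := by exact_mod_cast hn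
    linarith
  -- continuity of G on Ioi 0
  have hderiv : ContinuousOn (deriv f) (Ioi 0) :=
    hreg.continuousOn_deriv_of_isOpen isOpen_Ioi le_rfl
  have hcont : ContinuousOn G (Ioi 0) := by
    have hf_cont : ContinuousOn f (Ioi 0) := hreg.continuousOn
    exact (continuousOn_const.mul hf_cont).add (continuousOn_id.mul hderiv)
  -- G positive near 0
  have hG0 : Tendsto G (nhdsWithin 0 (Ioi 0)) (nhds (((n : ℝ) - 2) / 2 * L)) := by
    have := ((tendsto_const_nhds (x := ((n : ℝ) - 2) / 2)).mul h0).add h0'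
    simpa using this
  have hLpos : 0 < ((n : ℝ) - 2) / 2 * L := by positivity
  obtain ⟨s₀, hs₀, hGs₀⟩ : ∃ s₀ ∈ Ioi (0 : ℝ), 0 < G s₀ := by
    have hev : ∀ᶠ s in nhdsWithin 0 (Ioi 0), 0 < G s :=
      hG0.eventually (eventually_gt_nhds hLpos)
    have hne : (nhdsWithin (0:ℝ) (Ioi 0)).NeBot := nhdsGT_neBot 0
    obtain ⟨s₀, hs₀, h⟩ := (hev.and self_mem_nhdsWithin).exists
    exact ⟨s₀, h, hs₀⟩
  -- G negative at infinity
  have hkey : Tendsto (fun s => s ^ (n - 2) * G s) atTop (nhds (-(((n : ℝ) - 2) / 2 * μ))) := by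
    have heq : ∀ᶠ s in atTop, ((n : ℝ) - 2) / 2 * (s ^ (n - 2) * f s)
        + s ^ (n - 1) * deriv f s = s ^ (n - 2) * G s := by
      filter_upwards [eventually_gt_atTop (0 : ℝ)] with s hs
      have hpow : s ^ (n - 1) = s ^ (n - 2) * s := by
        rw [← pow_succ]
        congr 1
        omega
      simp only [hG]
      rw [hpow]; ring
    have := ((tendsto_const_nhds (x := ((n : ℝ) - 2) / 2)).mul hf).add hf'
    have h2 : ((n : ℝ) - 2) / 2 * μ + -((n : ℝ) - 2) * μ = -(((n : ℝ) - 2) / 2 * μ) := by ring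
    rw [h2] at this
    exact this.congr' heq
  have hlt0 : -(((n : ℝ) - 2) / 2 * μ) < 0 := by
    have : (0:ℝ) < ((n : ℝ) - 2) / 2 * μ := by positivity
    linarith
  have hneg : ∀ᶠ s in atTop, s ^ (n - 2) * G s < 0 :=
    hkey.eventually (eventually_lt_nhds hlt0)
  obtain ⟨s₁, ⟨hGs₁neg, hs₀s₁⟩, hs₁pos⟩ := ((hneg.and (eventually_gt_atTop s₀)).and
    (eventually_gt_atTop 0)).exists
  have hGs₁ : G s₁ < 0 := by
    have hp : (0:ℝ) < s₁ ^ (n - 2) := pow_pos hs₁pos _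
    nlinarith
  -- IVT
  have hsub : Icc s₀ s₁ ⊆ Ioi 0 := fun x hx => lt_of_lt_of_le hs₀ hx.1
  have := intermediate_value_Icc' (le_of_lt hs₀s₁) (hcont.mono hsub)
  obtain ⟨c, hc, hGc⟩ := this ⟨le_of_lt hGs₁, le_of_lt hGs₀⟩
  exact ⟨c, lt_of_lt_of_le hs₀ hc.1, hGc⟩
end
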